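/- arXiv:quant-ph/0205013 — 5 statements merged into one kernel-verified Lean document; each statement's English description precedes it below -/
import Mathlib

section
/- For real numbers a₁, a₂, a₃ in [-1,1], if 1 + 2a₁a₂a₃ - a₁² - a₂² - a₃² ≥ 0, then with φᵢ = arccos aᵢ the triangle inequality φ₃ ≤ φ₁ + φ₂ holds. -/
theorem gram_nonneg_implies_triangle
    (a₁ a₂ a₃ : ℝ)
    (h₁ : a₁ ∈ Set.Icc (-1 : ℝ) 1) (h₂ : a₂ ∈ Set.Icc (-1 : ℝ) 1)
    (h₃ : a₃ ∈ Set.Icc (-1 : ℝ) 1)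
    (hG : 1 + 2 * a₁ * a₂ * a₃ - a₁ ^ 2 - a₂ ^ 2 - a₃ ^ 2 ≥ 0) :
    Real.arccos a₃ ≤ Real.arccos a₁ + Real.arccos a₂ := by
  obtain ⟨l1, u1⟩ := h₁
  obtain ⟨l2, u2⟩ := h₂
  obtain ⟨l3, u3⟩ := h₃
  by_cases hπ : Real.pi ≤ Real.arccos a₁ + Real.arccos a₂
  · exact le_trans (Real.arccos_le_pi a₃) hπ
  push_neg at hπ
  have h0 : 0 ≤ Real.arccos a₁ + Real.arccos a₂ :=
    add_nonneg (Real.arccos_nonneg a₁) (Real.arccos_nonneg a₂)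
  have hcos : Real.cos (Real.arccos a₁ + Real.arccos a₂)
      = a₁ * a₂ - Real.sqrt (1 - a₁ ^ 2) * Real.sqrt (1 - a₂ ^ 2) := by
    rw [Real.cos_add, Real.cos_arccos l1 u1, Real.cos_arccos l2 u2,
      Real.sin_arccos, Real.sin_arccos]
  have hs1 : Real.sqrt (1 - a₁ ^ 2) ^ 2 = 1 - a₁ ^ 2 :=
    Real.sq_sqrt (by nlinarith)
  have hs2 : Real.sqrt (1 - a₂ ^ 2) ^ 2 = 1 - a₂ ^ 2 :=
    Real.sq_sqrt (by nlinarith)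
  have hprod : (Real.sqrt (1 - a₁ ^ 2) * Real.sqrt (1 - a₂ ^ 2)) ^ 2
      = (1 - a₁ ^ 2) * (1 - a₂ ^ 2) := by rw [mul_pow, hs1, hs2]
  have hkey : a₁ * a₂ - Real.sqrt (1 - a₁ ^ 2) * Real.sqrt (1 - a₂ ^ 2) ≤ a₃ := by
    nlinarith [mul_nonneg (Real.sqrt_nonneg (1 - a₁ ^ 2)) (Real.sqrt_nonneg (1 - a₂ ^ 2)),
      hprod, hG]
  have hanti : ∀ x y : ℝ, x ≤ y → Real.arccos y ≤ Real.arccos x := by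
    intro x y hxy
    unfold Real.arccos
    have := Real.monotone_arcsin hxy
    linarith
  calc Real.arccos a₃ ≤ Real.arccos (Real.cos (Real.arccos a₁ + Real.arccos a₂)) := by
        exact hanti _ _ (hcos ▸ hkey)
    _ = Real.arccos a₁ + Real.arccos a₂ := Real.arccos_cos h0 hπ.le
end

section
/- For angles α, β, γ ∈ [0,π] satisfying γ ≤ α + β, α ≤ β + γ, β ≤ α + γ, and α + β + γ ≤ 2π, the inequality cos²α + cos²β + cos²γ - 1 ≤ 2·cosα·cosβ·cosγ holds. -/
theorem accardi_fedullo_of_triangle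
    (α β γ : ℝ)
    (hα : α ∈ Set.Icc 0 Real.pi) (hβ : β ∈ Set.Icc 0 Real.pi)
    (hγ : γ ∈ Set.Icc 0 Real.pi)
    (h1 : γ ≤ α + β) (h2 : α ≤ β + γ) (h3 : β ≤ α + γ)
    (h4 : α + β + γ ≤ 2 * Real.pi) :
    Real.cos α ^ 2 + Real.cos β ^ 2 + Real.cos γ ^ 2 - 1
      ≤ 2 * Real.cos α * Real.cos β * Real.cos γ := by
  obtain ⟨hα0, hαπ⟩ := hα
  obtain ⟨hβ0, hβπ⟩ := hβ
  obtain ⟨hγ0, hγπ⟩ := hγ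
  have hf1 : Real.cos (β + γ) ≤ Real.cos α := by
    rcases le_or_gt (β + γ) Real.pi with h | h
    · exact Real.cos_le_cos_of_nonneg_of_le_pi hα0 h h2
    · have : Real.cos (β + γ) = Real.cos (2 * Real.pi - (β + γ)) := by
        rw [Real.cos_two_pi_sub]
      rw [this]
      exact Real.cos_le_cos_of_nonneg_of_le_pi hα0 (by linarith) (by linarith)
  have hf2 : Real.cos α ≤ Real.cos (β - γ) := by
    have : Real.cos (β - γ) = Real.cos |β - γ| := (Real.cos_abs _).symm
    rw [this]
    exact Real.cos_le_cos_of_nonneg_of_le_pi (abs_nonneg _) hαπ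
      (abs_sub_le_iff.2 ⟨by linarith, by linarith⟩)
  have hP : 0 ≤ (Real.cos α - Real.cos (β + γ)) * (Real.cos (β - γ) - Real.cos α) :=
    mul_nonneg (by linarith) (by linarith)
  rw [Real.cos_add, Real.cos_sub] at hP
  nlinarith [Real.sin_sq_add_cos_sq β, Real.sin_sq_add_cos_sq γ, hP]
end

section
/- For any four unit vectors a, b, c, d in a real inner product space, |⟨a,b⟩ + ⟨a,c⟩ + ⟨d,b⟩ - ⟨d,c⟩| ≤ 2√2 (the Tsirelson-type bound for the CHSH expression). -/
open RealInnerProductSpace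

theorem chsh_tsirelson_bound
    {H : Type*} [NormedAddCommGroup H] [InnerProductSpace ℝ H]
    (a b c d : H) (ha : ‖a‖ = 1) (hb : ‖b‖ = 1) (hc : ‖c‖ = 1) (hd : ‖d‖ = 1) :
    |⟪a, b⟫ + ⟪a, c⟫ + ⟪d, b⟫ - ⟪d, c⟫| ≤ 2 * Real.sqrt 2 := by
  have key : ⟪a, b⟫ + ⟪a, c⟫ + ⟪d, b⟫ - ⟪d, c⟫ = ⟪a, b + c⟫ + ⟪d, b - c⟫ := by
    rw [inner_add_right, inner_sub_right]; ring
  have h1 : |⟪a, b + c⟫| ≤ ‖b + c‖ := by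
    calc |⟪a, b + c⟫| ≤ ‖a‖ * ‖b + c‖ := abs_real_inner_le_norm a (b + c)
    _ = ‖b + c‖ := by rw [ha, one_mul]
  have h2 : |⟪d, b - c⟫| ≤ ‖b - c‖ := by
    calc |⟪d, b - c⟫| ≤ ‖d‖ * ‖b - c‖ := abs_real_inner_le_norm d (b - c)
    _ = ‖b - c‖ := by rw [hd, one_mul]
  have hpar : ‖b + c‖ ^ 2 + ‖b - c‖ ^ 2 = 4 := by
    have := parallelogram_law_with_norm ℝ b c
    rw [hb, hc] at this
    nlinarith [this]
  have hsum : ‖b + c‖ + ‖b - c‖ ≤ 2 * Real.sqrt 2 := by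
    have hnn : (0:ℝ) ≤ 2 * Real.sqrt 2 := by positivity
    have hs : Real.sqrt 2 ^ 2 = 2 := Real.sq_sqrt (by norm_num)
    nlinarith [sq_nonneg (‖b + c‖ - ‖b - c‖), norm_nonneg (b + c), norm_nonneg (b - c),
      sq_nonneg (‖b + c‖ + ‖b - c‖ - 2 * Real.sqrt 2), Real.sqrt_nonneg 2]
  rw [key]
  calc |⟪a, b + c⟫ + ⟪d, b - c⟫| ≤ |⟪a, b + c⟫| + |⟪d, b - c⟫| := abs_add_le _ _
  _ ≤ ‖b + c‖ + ‖b - c‖ := add_le_add h1 h2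
  _ ≤ 2 * Real.sqrt 2 := hsum
end

section
/- Suppose a, b, c, d are unit vectors in a real inner product space with b + c ≠ 0 and b - c ≠ 0. Then |⟨a,b⟩ + ⟨a,c⟩ + ⟨d,b⟩ - ⟨d,c⟩| = 2·|cos(θ_{bc}/2)·cos θ_{a,b+c} + sin(θ_{bc}/2)·cos θ_{d,b-c}|, where θ_{bc} = arccos⟨b,c⟩, cos θ_{a,b+c} = ⟨a,b+c⟩/‖b+c‖, and cos θ_{d,b-c} = ⟨d,b-c⟩/‖b-c‖. -/
open RealInnerProductSpace

theorem chsh_inequality_equality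
    {H : Type*} [NormedAddCommGroup H] [InnerProductSpace ℝ H]
    (a b c d : H) (ha : ‖a‖ = 1) (hb : ‖b‖ = 1) (hc : ‖c‖ = 1) (hd : ‖d‖ = 1)
    (hbc : b + c ≠ 0) (hbc' : b - c ≠ 0) :
    |⟪a, b⟫ + ⟪a, c⟫ + ⟪d, b⟫ - ⟪d, c⟫|
      = 2 * |Real.cos (Real.arccos ⟪b, c⟫ / 2) * (⟪a, b + c⟫ / ‖b + c‖)
          + Real.sin (Real.arccos ⟪b, c⟫ / 2) * (⟪d, b - c⟫ / ‖b - c‖)| := by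
  have hp : ‖b + c‖ ≠ 0 := norm_ne_zero_iff.mpr hbc
  have hm : ‖b - c‖ ≠ 0 := norm_ne_zero_iff.mpr hbc'
  have hθ1 : -Real.pi ≤ Real.arccos ⟪b, c⟫ := by
    linarith [Real.arccos_nonneg ⟪b, c⟫, Real.pi_pos]
  have hθ2 : Real.arccos ⟪b, c⟫ ≤ Real.pi := Real.arccos_le_pi _
  have hbc1 : |⟪b, c⟫| ≤ 1 := by
    have := abs_real_inner_le_norm b c
    rw [hb, hc] at this; simpa using this
  have hcosθ : Real.cos (Real.arccos ⟪b, c⟫) = ⟪b, c⟫ :=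
    Real.cos_arccos (neg_le_of_abs_le hbc1) (le_of_abs_le hbc1)
  have hnp : ‖b + c‖ ^ 2 = 2 + 2 * ⟪b, c⟫ := by
    rw [@norm_add_sq_real, hb, hc, real_inner_comm]; ring
  have hnm : ‖b - c‖ ^ 2 = 2 - 2 * ⟪b, c⟫ := by
    rw [@norm_sub_sq_real, hb, hc, real_inner_comm]; ring
  have hcoshalf : Real.cos (Real.arccos ⟪b, c⟫ / 2) = ‖b + c‖ / 2 := by
    rw [Real.cos_half hθ1 hθ2, hcosθ]
    rw [show (1 + ⟪b, c⟫) / 2 = (‖b + c‖ / 2) ^ 2 by rw [div_pow, hnp]; ring]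
    exact Real.sqrt_sq (by positivity)
  have hsinhalf : Real.sin (Real.arccos ⟪b, c⟫ / 2) = ‖b - c‖ / 2 := by
    rw [Real.sin_half_eq_sqrt (Real.arccos_nonneg _) (by linarith [Real.pi_pos]), hcosθ]
    rw [show (1 - ⟪b, c⟫) / 2 = (‖b - c‖ / 2) ^ 2 by rw [div_pow, hnm]; ring]
    exact Real.sqrt_sq (by positivity)
  rw [hcoshalf, hsinhalf]
  rw [show ‖b + c‖ / 2 * (⟪a, b + c⟫ / ‖b + c‖) + ‖b - c‖ / 2 * (⟪d, b - c⟫ / ‖b - c‖)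
      = (⟪a, b + c⟫ + ⟪d, b - c⟫) / 2 by field_simp]
  rw [inner_add_right, inner_sub_right, abs_div]
  rw [show ⟪a, b⟫ + ⟪a, c⟫ + ⟪d, b⟫ - ⟪d, c⟫ = ⟪a, b⟫ + ⟪a, c⟫ + (⟪d, b⟫ - ⟪d, c⟫) by ring]
  simp [abs_of_nonneg]
  ring
end

section
/- With notation as in the CHSH inequality-equality, |⟨a,b⟩ + ⟨a,c⟩ + ⟨d,b⟩ - ⟨d,c⟩| = 2·√(cos² θ_{a,b+c} + cos² θ_{d,b-c})·|cos θ_{u₁,u₂}|, where u₁ = (cos(θ_{bc}/2), sin(θ_{bc}/2)) and u₂ is the unit vector in direction (cos θ_{a,b+c}, cos θ_{d,b-c}) in ℝ², provided (cos θ_{a,b+c}, cos θ_{d,b-c}) ≠ (0,0). -/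
open RealInnerProductSpace

theorem chsh_inequality_equality_two_vector
    {H : Type*} [NormedAddCommGroup H] [InnerProductSpace ℝ H]
    (a b c d : H) (ha : ‖a‖ = 1) (hb : ‖b‖ = 1) (hc : ‖c‖ = 1) (hd : ‖d‖ = 1)
    (hbc : b + c ≠ 0) (hbc' : b - c ≠ 0)
    (ca cd' cosu : ℝ)
    (hca : ca = ⟪a, b + c⟫ / ‖b + c‖)
    (hcd : cd' = ⟪d, b - c⟫ / ‖b - c‖)
    (hne : (ca, cd') ≠ (0, 0))
    (hcosu : cosu =
      (Real.cos (Real.arccos ⟪b, c⟫ / 2) * ca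
        + Real.sin (Real.arccos ⟪b, c⟫ / 2) * cd')
        / Real.sqrt (ca ^ 2 + cd' ^ 2)) :
    |⟪a, b⟫ + ⟪a, c⟫ + ⟪d, b⟫ - ⟪d, c⟫|
      = 2 * Real.sqrt (ca ^ 2 + cd' ^ 2) * |cosu| := by
  set θ := Real.arccos ⟪b, c⟫ with hθ
  have hbc1 : |⟪b, c⟫| ≤ 1 := by
    have := abs_real_inner_le_norm b c
    rwa [hb, hc, one_mul] at this
  have hcosθ : Real.cos θ = ⟪b, c⟫ :=
    Real.cos_arccos (neg_le_of_abs_le hbc1) (le_of_abs_le hbc1)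
  have hθ0 : 0 ≤ θ / 2 := by
    have := Real.arccos_nonneg ⟪b, c⟫; linarith
  have hθπ : θ / 2 ≤ Real.pi / 2 := by
    have := Real.arccos_le_pi ⟪b, c⟫; linarith
  have hcos_nn : 0 ≤ Real.cos (θ / 2) := Real.cos_nonneg_of_mem_Icc ⟨by linarith [Real.pi_pos], hθπ⟩
  have hsin_nn : 0 ≤ Real.sin (θ / 2) := Real.sin_nonneg_of_nonneg_of_le_pi hθ0 (by linarith [Real.pi_pos])
  have hnadd : ‖b + c‖ = 2 * Real.cos (θ / 2) := by
    have h1 : ‖b + c‖ ^ 2 = (2 * Real.cos (θ / 2)) ^ 2 := by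
      rw [norm_add_sq_real, hb, hc]
      have h := Real.cos_sq (θ / 2)
      rw [show 2 * (θ / 2) = θ by ring, hcosθ] at h
      nlinarith
    have h2 : 0 ≤ ‖b + c‖ := norm_nonneg _
    nlinarith
  have hnsub : ‖b - c‖ = 2 * Real.sin (θ / 2) := by
    have h1 : ‖b - c‖ ^ 2 = (2 * Real.sin (θ / 2)) ^ 2 := by
      rw [norm_sub_sq_real, hb, hc]
      have h := Real.sin_sq (θ / 2)
      have h2 := Real.cos_sq (θ / 2)
      rw [show 2 * (θ / 2) = θ by ring, hcosθ] at h2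
      nlinarith
    have h2 : 0 ≤ ‖b - c‖ := norm_nonneg _
    nlinarith
  have hS : 0 < ca ^ 2 + cd' ^ 2 := by
    rcases eq_or_ne ca 0 with h | h
    · have : cd' ≠ 0 := fun h' => hne (by rw [h, h'])
      positivity
    · positivity
  have hsS : 0 < Real.sqrt (ca ^ 2 + cd' ^ 2) := Real.sqrt_pos.mpr hS
  have hnadd0 : ‖b + c‖ ≠ 0 := norm_ne_zero_iff.mpr hbc
  have hnsub0 : ‖b - c‖ ≠ 0 := norm_ne_zero_iff.mpr hbc'
  have hia : ⟪a, b + c⟫ = ca * ‖b + c‖ := by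
    rw [hca]; field_simp
  have hid : ⟪d, b - c⟫ = cd' * ‖b - c‖ := by
    rw [hcd]; field_simp
  have hL : ⟪a, b⟫ + ⟪a, c⟫ + ⟪d, b⟫ - ⟪d, c⟫ = ⟪a, b + c⟫ + ⟪d, b - c⟫ := by
    rw [inner_add_right, inner_sub_right]; ring
  rw [hL, hia, hid, hnadd, hnsub, hcosu]
  rw [abs_div, abs_of_pos hsS]
  rw [show ca * (2 * Real.cos (θ / 2)) + cd' * (2 * Real.sin (θ / 2))
      = 2 * (Real.cos (θ / 2) * ca + Real.sin (θ / 2) * cd') by ring, abs_mul, abs_two]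
  field_simp
end
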